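/- Let u : ℝ^d → ℝ be of class C⁵ (ContDiff ℝ 5), let H be ℓ¹-Lipschitz in its first argument, i.e. there is L ≥ 0 with |H(p,u,x) − H(q,u,x)| ≤ L Σ_{i=1}^d |p_i − q_i| for all p, q ∈ ℝ^d, u ∈ ℝ, x ∈ ℝ^d, and fix β ≥ 0, γ ≥ 0, θ ∈ ℝ, p ∈ [0,1]. Then for every compact set K ⊆ ℝ^d there exists a constant C ≥ 0 such that for every mesh vector h with 0 < h_i ≤ 1 for all i and every x ∈ K, |Ĥ_h[u](x) − (H(∇u(x), u(x), x) + θ u(x))| ≤ C h_max². (Second-order local truncation error of the high-order scheme at interior grid points.) -/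

import Mathlib

/-!
On the coordinate line `g t = u (x + t • eᵢ)` the difference quotients of the scheme are symmetric
Taylor expansions at `t = 0` in which the odd (resp. even) terms cancel:
`g s - 2 g 0 + g (-s) = s² g''(0) + O(s⁴)` and `g s - g (-s) = 2 s g'(0) + O(s³)`.
Hence `δᵢ u = ∂ᵢ u + O(h²)`, which the Lipschitz bound on `H` carries over; `Δ_h u = O(1)` is
damped by `h_max²`; and `Δ_{2h} u - Δ_h u = O(h²)` since both quotients have the leading term
`∂ᵢ²u(x)`, while `h_max^p ≤ 1`. As `hᵢ ≤ 1`, every stencil point lies within distance 2 of `K`,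
so the constants are bounds for `D²u`, `D³u`, `D⁴u` on the closed 2-thickening of `K`.
-/

open Finset Nat Metric

theorem exists_taylor_lagrange_at_zero {f : ℝ → ℝ} {n : ℕ} (hf : ContDiff ℝ (n + 1) f)
    {x : ℝ} (hx : x ≠ 0) :
    ∃ ξ, |ξ| ≤ |x| ∧ f x = ∑ k ∈ range (n + 1), iteratedDeriv k f 0 * x ^ k / k ! +
      iteratedDeriv (n + 1) f ξ * x ^ (n + 1) / (n + 1)! := by
  obtain ⟨ξ, hξ, h⟩ := taylor_mean_remainder_lagrange_iteratedDeriv hx.symm hf.contDiffOn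
  refine ⟨ξ, by simpa using Set.abs_sub_left_of_mem_uIcc (Set.uIoo_subset_uIcc_self hξ), ?_⟩
  rw [sub_zero, sub_eq_iff_eq_add', taylor_within_apply] at h
  rw [h, sub_zero]
  congr 1
  refine sum_congr rfl fun k hk => ?_
  rw [iteratedDerivWithin_eq_iteratedDeriv (uniqueDiffOn_uIcc hx.symm)
    (hf.contDiffAt.of_le (by exact_mod_cast (mem_range.1 hk).le)) Set.left_mem_uIcc, smul_eq_mul]
  ring

section OneVariable

variable {g : ℝ → ℝ} {n : ℕ} {s B : ℝ}

theorem exists_taylor_at_pm_of_abs_iteratedDeriv_le (hg : ContDiff ℝ (n + 1) g) (hs : 0 < s)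
    (hB : ∀ t, |t| ≤ s → |iteratedDeriv (n + 1) g t| ≤ B) :
    ∃ a b, |a| ≤ B ∧ |b| ≤ B ∧
      g s = ∑ k ∈ range (n + 1), iteratedDeriv k g 0 * s ^ k / k ! + a * s ^ (n + 1) / (n + 1)! ∧
      g (-s) = ∑ k ∈ range (n + 1), iteratedDeriv k g 0 * (-s) ^ k / k ! +
        b * (-s) ^ (n + 1) / (n + 1)! := by
  obtain ⟨ξ, hξ, hright⟩ := exists_taylor_lagrange_at_zero hg hs.ne'
  obtain ⟨η, hη, hleft⟩ := exists_taylor_lagrange_at_zero hg (neg_ne_zero.2 hs.ne')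
  rw [abs_of_pos hs] at hξ
  rw [abs_neg, abs_of_pos hs] at hη
  exact ⟨_, _, hB ξ hξ, hB η hη, hright, hleft⟩

theorem abs_second_difference_le_of_iteratedDeriv_le (hg : ContDiff ℝ 2 g) (hs : 0 < s)
    (hB : ∀ t, |t| ≤ s → |iteratedDeriv 2 g t| ≤ B) :
    |g s - 2 * g 0 + g (-s)| ≤ B * s ^ 2 := by
  obtain ⟨a, b, ha, hb, hright, hleft⟩ :=
    exists_taylor_at_pm_of_abs_iteratedDeriv_le (n := 1) hg hs hB
  simp only [sum_range_succ, sum_range_zero, iteratedDeriv_zero] at hright hleft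
  rw [hright, hleft, abs_le]
  norm_num [factorial]
  constructor <;> nlinarith [abs_le.1 ha, abs_le.1 hb, sq_nonneg s]

theorem abs_central_difference_sub_deriv_le_of_iteratedDeriv_le (hg : ContDiff ℝ 3 g)
    (hs : 0 < s) (hB : ∀ t, |t| ≤ s → |iteratedDeriv 3 g t| ≤ B) :
    |g s - g (-s) - 2 * s * deriv g 0| ≤ B * s ^ 3 / 3 := by
  obtain ⟨a, b, ha, hb, hright, hleft⟩ :=
    exists_taylor_at_pm_of_abs_iteratedDeriv_le (n := 2) hg hs hB
  simp only [sum_range_succ, sum_range_zero, iteratedDeriv_zero, iteratedDeriv_one] at hright hleft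
  rw [hright, hleft, abs_le]
  norm_num [factorial]
  constructor <;> nlinarith [abs_le.1 ha, abs_le.1 hb, pow_pos hs 3]

theorem abs_second_difference_sub_le_of_iteratedDeriv_le (hg : ContDiff ℝ 4 g) (hs : 0 < s)
    (hB : ∀ t, |t| ≤ s → |iteratedDeriv 4 g t| ≤ B) :
    |g s - 2 * g 0 + g (-s) - s ^ 2 * iteratedDeriv 2 g 0| ≤ B * s ^ 4 / 12 := by
  obtain ⟨a, b, ha, hb, hright, hleft⟩ :=
    exists_taylor_at_pm_of_abs_iteratedDeriv_le (n := 3) hg hs hB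
  simp only [sum_range_succ, sum_range_zero, iteratedDeriv_zero] at hright hleft
  rw [hright, hleft, abs_le]
  norm_num [factorial]
  constructor <;> nlinarith [abs_le.1 ha, abs_le.1 hb, pow_pos hs 4]

end OneVariable

section Line

variable {E F : Type*} [NormedAddCommGroup E] [NormedSpace ℝ E] [NormedAddCommGroup F]
  [NormedSpace ℝ F] {u : E → F} {n : WithTop ℕ∞} {k : ℕ}

theorem ContDiff.comp_line (hu : ContDiff ℝ n u) (x w : E) :
    ContDiff ℝ n fun t : ℝ => u (x + t • w) :=
  hu.comp (contDiff_const.add (contDiff_id.smul contDiff_const))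

theorem iteratedDeriv_comp_line (hu : ContDiff ℝ n u) (hk : k ≤ n) (x w : E) (t : ℝ) :
    iteratedDeriv k (fun t : ℝ => u (x + t • w)) t =
      iteratedFDeriv ℝ k u (x + t • w) fun _ => w := by
  have hline : (fun t : ℝ => u (x + t • w)) =
      (fun y => u (x + y)) ∘ ContinuousLinearMap.toSpanSingleton ℝ w := rfl
  have hshift : ContDiff ℝ n fun y => u (x + y) := hu.comp (contDiff_const.add contDiff_id)
  rw [iteratedDeriv_eq_iteratedFDeriv, hline,
    ContinuousLinearMap.iteratedFDeriv_comp_right _ hshift t hk]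
  simp [iteratedFDeriv_comp_add_left]

theorem norm_iteratedDeriv_comp_line_le (hu : ContDiff ℝ n u) (hk : k ≤ n) {x w : E}
    (hw : ‖w‖ ≤ 1) {s B : ℝ} (hB : ∀ y ∈ closedBall x s, ‖iteratedFDeriv ℝ k u y‖ ≤ B)
    {t : ℝ} (ht : |t| ≤ s) :
    ‖iteratedDeriv k (fun t : ℝ => u (x + t • w)) t‖ ≤ B := by
  have hy : x + t • w ∈ closedBall x s := by
    rw [mem_closedBall, dist_self_add_left, norm_smul, Real.norm_eq_abs]
    nlinarith [abs_nonneg t, norm_nonneg w]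
  have hBy := hB _ hy
  rw [iteratedDeriv_comp_line hu hk]
  calc _ ≤ ‖iteratedFDeriv ℝ k u (x + t • w)‖ * ∏ _ : Fin k, ‖w‖ :=
        ContinuousMultilinearMap.le_opNorm _ _
    _ ≤ B * 1 := by
        refine mul_le_mul hBy ?_ (by positivity) ((norm_nonneg _).trans hBy)
        simpa using pow_le_one₀ (norm_nonneg w) hw
    _ = B := mul_one B

theorem deriv_comp_line_zero (hu : ContDiff ℝ n u) (hn : 1 ≤ n) (x w : E) :
    deriv (fun t : ℝ => u (x + t • w)) 0 = fderiv ℝ u x w := by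
  simpa [iteratedFDeriv_one_apply] using iteratedDeriv_comp_line hu (k := 1) hn x w 0

end Line

section DifferenceQuotients

variable {E : Type*} [NormedAddCommGroup E] [NormedSpace ℝ E] {u : E → ℝ} {x w : E} {s B : ℝ}

theorem abs_second_difference_div_le (hu : ContDiff ℝ 2 u) (hw : ‖w‖ ≤ 1) (hs : 0 < s)
    (hB : ∀ y ∈ closedBall x s, ‖iteratedFDeriv ℝ 2 u y‖ ≤ B) :
    |(u (x + s • w) - 2 * u x + u (x - s • w)) / s ^ 2| ≤ B := by
  have h := abs_second_difference_le_of_iteratedDeriv_le (hu.comp_line x w) hs fun t ht => by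
    simpa only [Real.norm_eq_abs] using norm_iteratedDeriv_comp_line_le hu le_rfl hw hB ht
  simp only [neg_smul, ← sub_eq_add_neg, zero_smul, add_zero] at h
  rwa [abs_div, abs_of_pos (pow_pos hs 2), div_le_iff₀ (pow_pos hs 2)]

theorem abs_central_difference_sub_fderiv_le (hu : ContDiff ℝ 3 u) (hw : ‖w‖ ≤ 1) (hs : 0 < s)
    (hB : ∀ y ∈ closedBall x s, ‖iteratedFDeriv ℝ 3 u y‖ ≤ B) :
    |(u (x + s • w) - u (x - s • w)) / (2 * s) - fderiv ℝ u x w| ≤ B * s ^ 2 / 6 := by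
  have h := abs_central_difference_sub_deriv_le_of_iteratedDeriv_le (hu.comp_line x w) hs
    fun t ht => by
      simpa only [Real.norm_eq_abs] using norm_iteratedDeriv_comp_line_le hu le_rfl hw hB ht
  simp only [neg_smul, ← sub_eq_add_neg, deriv_comp_line_zero hu (by norm_num)] at h
  have h2s : 0 < 2 * s := by positivity
  rw [show (u (x + s • w) - u (x - s • w)) / (2 * s) - fderiv ℝ u x w =
      (u (x + s • w) - u (x - s • w) - 2 * s * fderiv ℝ u x w) / (2 * s) by field_simp,
    abs_div, abs_of_pos h2s, div_le_iff₀ h2s]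
  calc _ ≤ B * s ^ 3 / 3 := h
    _ = _ := by ring

theorem abs_staggered_difference_sub_le (hu : ContDiff ℝ 4 u) (hw : ‖w‖ ≤ 1) (hs : 0 < s)
    (hB : ∀ y ∈ closedBall x (2 * s), ‖iteratedFDeriv ℝ 4 u y‖ ≤ B) :
    |(u (x + (2 * s) • w) - 2 * u x + u (x - (2 * s) • w)) / (4 * s ^ 2)
      - (u (x + s • w) - 2 * u x + u (x - s • w)) / s ^ 2| ≤ 5 * B * s ^ 2 / 12 := by
  have hB' (r : ℝ) (hr : r ≤ 2 * s) (t : ℝ) (ht : |t| ≤ r) :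
      |iteratedDeriv 4 (fun t : ℝ => u (x + t • w)) t| ≤ B := by
    simpa only [Real.norm_eq_abs] using
      norm_iteratedDeriv_comp_line_le hu le_rfl hw hB (ht.trans hr)
  have h1 := abs_second_difference_sub_le_of_iteratedDeriv_le (hu.comp_line x w) hs
    (hB' s (by linarith))
  have h2 := abs_second_difference_sub_le_of_iteratedDeriv_le (hu.comp_line x w)
    (by positivity : 0 < 2 * s) (hB' (2 * s) le_rfl)
  simp only [neg_smul, ← sub_eq_add_neg, zero_smul, add_zero] at h1 h2
  set c := iteratedDeriv 2 (fun t : ℝ => u (x + t • w)) 0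
  set A₁ := u (x + s • w) - 2 * u x + u (x - s • w)
  set A₂ := u (x + (2 * s) • w) - 2 * u x + u (x - (2 * s) • w)
  have hsplit : A₂ / (4 * s ^ 2) - A₁ / s ^ 2 =
      (A₂ - (2 * s) ^ 2 * c) / (4 * s ^ 2) - (A₁ - s ^ 2 * c) / s ^ 2 := by
    field_simp
    ring
  rw [hsplit]
  calc _ ≤ |A₂ - (2 * s) ^ 2 * c| / (4 * s ^ 2) + |A₁ - s ^ 2 * c| / s ^ 2 := by
        refine (abs_sub _ _).trans_eq ?_
        rw [abs_div, abs_div, abs_of_pos (by positivity : (0 : ℝ) < 4 * s ^ 2),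
          abs_of_pos (pow_pos hs 2)]
    _ ≤ B * (2 * s) ^ 4 / 12 / (4 * s ^ 2) + B * s ^ 4 / 12 / s ^ 2 := by gcongr
    _ = 5 * B * s ^ 2 / 12 := by field_simp; ring

end DifferenceQuotients

theorem IsCompact.exists_bound_norm_iteratedFDeriv {E F : Type*} [NormedAddCommGroup E]
    [NormedSpace ℝ E] [NormedAddCommGroup F] [NormedSpace ℝ F] {u : E → F} {n : WithTop ℕ∞}
    {K : Set E} (hK : IsCompact K) (hu : ContDiff ℝ n u) {k : ℕ} (hk : k ≤ n) :
    ∃ M, 0 ≤ M ∧ ∀ y ∈ K, ‖iteratedFDeriv ℝ k u y‖ ≤ M := by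
  obtain ⟨C, hC⟩ := hK.exists_bound_of_continuousOn (hu.continuous_iteratedFDeriv hk).continuousOn
  exact ⟨max C 0, le_max_right C 0, fun y hy => le_max_of_le_left (by simpa using hC y hy)⟩

theorem sum_le_card_mul {ι : Type*} [Fintype ι] {f : ι → ℝ} {b : ℝ} (h : ∀ i, f i ≤ b) :
    ∑ i, f i ≤ Fintype.card ι * b := by
  simpa using sum_le_card_nsmul univ f b fun i _ => h i

section Sums

variable {ι E : Type*} [Fintype ι] [NormedAddCommGroup E] [NormedSpace ℝ E] {u : E → ℝ} {x : E}
  {e : ι → E} {h : ι → ℝ} {r B : ℝ}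

theorem abs_sum_second_difference_div_le (hu : ContDiff ℝ 2 u) (he : ∀ i, ‖e i‖ ≤ 1)
    (hh : ∀ i, 0 < h i) (hr : ∀ i, h i ≤ r)
    (hB : ∀ y ∈ closedBall x r, ‖iteratedFDeriv ℝ 2 u y‖ ≤ B) :
    |∑ i, (u (x + h i • e i) - 2 * u x + u (x - h i • e i)) / h i ^ 2| ≤ Fintype.card ι * B :=
  (abs_sum_le_sum_abs _ _).trans <| sum_le_card_mul fun i => abs_second_difference_div_le hu (he i)
    (hh i) fun y hy => hB y (closedBall_subset_closedBall (hr i) hy)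

theorem sum_abs_central_difference_sub_fderiv_le (hu : ContDiff ℝ 3 u) (he : ∀ i, ‖e i‖ ≤ 1)
    (hh : ∀ i, 0 < h i) (hr : ∀ i, h i ≤ r)
    (hB : ∀ y ∈ closedBall x r, ‖iteratedFDeriv ℝ 3 u y‖ ≤ B) :
    ∑ i, |(u (x + h i • e i) - u (x - h i • e i)) / (2 * h i) - fderiv ℝ u x (e i)|
      ≤ Fintype.card ι * (B * r ^ 2 / 6) := by
  refine sum_le_card_mul fun i => (abs_central_difference_sub_fderiv_le hu (he i) (hh i)
    fun y hy => hB y (closedBall_subset_closedBall (hr i) hy)).trans ?_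
  have hB0 : 0 ≤ B := (norm_nonneg _).trans (hB x (mem_closedBall_self ((hh i).le.trans (hr i))))
  gcongr
  exacts [(hh i).le, hr i]

theorem abs_sum_staggered_difference_sub_le (hu : ContDiff ℝ 4 u) (he : ∀ i, ‖e i‖ ≤ 1)
    (hh : ∀ i, 0 < h i) (hr : ∀ i, h i ≤ r)
    (hB : ∀ y ∈ closedBall x (2 * r), ‖iteratedFDeriv ℝ 4 u y‖ ≤ B) :
    |∑ i, (u (x + (2 * h i) • e i) - 2 * u x + u (x - (2 * h i) • e i)) / (4 * h i ^ 2)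
      - ∑ i, (u (x + h i • e i) - 2 * u x + u (x - h i • e i)) / h i ^ 2|
      ≤ Fintype.card ι * (5 * B * r ^ 2 / 12) := by
  rw [← sum_sub_distrib]
  refine (abs_sum_le_sum_abs _ _).trans <| sum_le_card_mul fun i =>
    (abs_staggered_difference_sub_le hu (he i) (hh i) fun y hy =>
      hB y (closedBall_subset_closedBall (by linarith [hr i]) hy)).trans ?_
  have hB0 : 0 ≤ B :=
    (norm_nonneg _).trans (hB x (mem_closedBall_self (by linarith [hh i, hr i])))
  gcongr
  exacts [(hh i).le, hr i]

end Sums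

theorem high_order_scheme_truncation {d : ℕ} (hd : 0 < d)
    (u : (Fin d → ℝ) → ℝ) (hu : ContDiff ℝ 5 u)
    (H : (Fin d → ℝ) → ℝ → (Fin d → ℝ) → ℝ)
    (L : ℝ) (hL : 0 ≤ L)
    (hLip : ∀ (p q : Fin d → ℝ) (v : ℝ) (x : Fin d → ℝ),
      |H p v x - H q v x| ≤ L * ∑ i, |p i - q i|)
    (β γ θ p : ℝ) (hβ : 0 ≤ β) (hγ : 0 ≤ γ) (hp : p ∈ Set.Icc (0 : ℝ) 1)
    (K : Set (Fin d → ℝ)) (hK : IsCompact K) :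
    ∃ C : ℝ, 0 ≤ C ∧ ∀ h : Fin d → ℝ, (∀ i, 0 < h i ∧ h i ≤ 1) → ∀ x ∈ K,
      let hmax : ℝ := Finset.univ.sup' ⟨⟨0, hd⟩, Finset.mem_univ _⟩ h
      let e : Fin d → (Fin d → ℝ) := fun i => Pi.single i 1
      let Δh : ℝ := ∑ i,
        (u (x + h i • e i) - 2 * u x + u (x - h i • e i)) / (h i) ^ 2
      let Δ2h : ℝ := ∑ i,
        (u (x + (2 * h i) • e i) - 2 * u x + u (x - (2 * h i) • e i)) / (4 * (h i) ^ 2)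
      let gradh : Fin d → ℝ := fun i =>
        (u (x + h i • e i) - u (x - h i • e i)) / (2 * h i)
      |(-β * hmax ^ 2 * Δh + H gradh (u x) x + θ * u x + γ * hmax ^ p * (Δ2h - Δh))
          - (H (fun i => fderiv ℝ u x (e i)) (u x) x + θ * u x)| ≤ C * hmax ^ 2 := by
  have hK₂ : IsCompact (cthickening 2 K) := hK.cthickening
  obtain ⟨M₂, hM₂, hD₂⟩ := hK₂.exists_bound_norm_iteratedFDeriv hu (k := 2) (by norm_num)
  obtain ⟨M₃, hM₃, hD₃⟩ := hK₂.exists_bound_norm_iteratedFDeriv hu (k := 3) (by norm_num)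
  obtain ⟨M₄, hM₄, hD₄⟩ := hK₂.exists_bound_norm_iteratedFDeriv hu (k := 4) (by norm_num)
  refine ⟨d * (β * M₂ + γ * (5 * M₄ / 12) + L * (M₃ / 6)), by positivity, fun h hh x hx => ?_⟩
  intro hmax e Δh Δ2h gradh
  have hle (i : Fin d) : h i ≤ hmax := le_sup' h (mem_univ i)
  have hmax_le : hmax ≤ 1 := sup'_le _ h fun i _ => (hh i).2
  have he (i : Fin d) : ‖e i‖ ≤ 1 := by simp [e, Pi.norm_single]
  have hball {ρ : ℝ} (hρ : ρ ≤ 2 * hmax) : closedBall x ρ ⊆ cthickening 2 K :=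
    (closedBall_subset_closedBall (by linarith)).trans
      (closedBall_subset_cthickening hx 2)
  have hpos (i : Fin d) : 0 < h i := (hh i).1
  have hmax_pos : 0 < hmax := (hpos ⟨0, hd⟩).trans_le (hle _)
  have hΔh : |Δh| ≤ d * M₂ := by
    simpa using abs_sum_second_difference_div_le (hu.of_le (by norm_num)) he hpos hle
      fun y hy => hD₂ y (hball (by linarith) hy)
  have hΔ2h : |Δ2h - Δh| ≤ d * (5 * M₄ * hmax ^ 2 / 12) := by
    simpa using abs_sum_staggered_difference_sub_le (hu.of_le (by norm_num)) he hpos hle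
      fun y hy => hD₄ y (hball le_rfl hy)
  have hgrad : |H gradh (u x) x - H (fun i => fderiv ℝ u x (e i)) (u x) x|
      ≤ L * (d * (M₃ * hmax ^ 2 / 6)) := by
    refine (hLip _ _ _ _).trans (mul_le_mul_of_nonneg_left ?_ hL)
    simpa using sum_abs_central_difference_sub_fderiv_le (hu.of_le (by norm_num)) he hpos hle
      fun y hy => hD₃ y (hball (by linarith) hy)
  have hpow : hmax ^ p ≤ 1 := Real.rpow_le_one hmax_pos.le hmax_le hp.1
  calc _ = |-(β * hmax ^ 2 * Δh) + γ * hmax ^ p * (Δ2h - Δh)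
          + (H gradh (u x) x - H (fun i => fderiv ℝ u x (e i)) (u x) x)| := by ring_nf
    _ ≤ β * hmax ^ 2 * |Δh| + γ * hmax ^ p * |Δ2h - Δh|
          + |H gradh (u x) x - H (fun i => fderiv ℝ u x (e i)) (u x) x| := by
      refine (abs_add_three _ _ _).trans_eq ?_
      rw [abs_neg, abs_mul (β * hmax ^ 2), abs_mul (γ * hmax ^ p),
        abs_of_nonneg (by positivity : 0 ≤ β * hmax ^ 2),
        abs_of_nonneg (by positivity : 0 ≤ γ * hmax ^ p)]
    _ ≤ β * hmax ^ 2 * (d * M₂) + γ * 1 * (d * (5 * M₄ * hmax ^ 2 / 12))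
          + L * (d * (M₃ * hmax ^ 2 / 6)) := by gcongr
    _ = _ := by ring
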